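/- Let R be an integral domain, N ≥ 1, and let A be the evolution algebra over R on the finite basis x_1, …, x_N with structure coefficients C. Suppose every basis element has nonzero square, i.e. for every i there exists k with C(k,i) ≠ 0. If N ≥ 1 then A is not nilpotent: for every n ≥ 2 there exists a sequence of indices i_1, …, i_n with C(i_n, i_{n-1}) ⋯ C(i_2, i_1) ≠ 0. -/
import Mathlib


/-!
Finite-dimensional evolution algebra over a commutative ring `R` on the basis
`x_1, …, x_N` (the standard basis of `Fin N → R`), with structure coefficient
matrix `C`: `x_i · x_i = ∑_k C(k,i) • x_k` and `x_i · x_j = 0` for `i ≠ j`;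
concretely `(a · b)(k) = ∑_i a(i) * b(i) * C(k,i)`.
-/
def evolMulFin {R : Type*} [CommRing R] {N : ℕ} (C : Matrix (Fin N) (Fin N) R)
    (a b : Fin N → R) : Fin N → R :=
  fun k => ∑ i, a i * b i * C k i

/-- Left-normed products: `lnp mul f m = ((f 0 · f 1) · f 2) ⋯ · f m`
is the left-normed product of the `m + 1` elements `f 0, …, f m`. -/
def lnp {A : Type*} (mul : A → A → A) (f : ℕ → A) : ℕ → A
  | 0 => f 0
  | m + 1 => mul (lnp mul f m) (f (m + 1))

/-- Over an integral domain `R`, if every basis element of the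
evolution algebra has nonzero square (for every `i` there is `k` with
`C k i ≠ 0`), then `A` is not nilpotent: for every `n ≥ 2` there is a sequence
of indices `i_1, …, i_n` (given by `g j = i_{j+1}`) with
`C(i_n,i_{n-1}) ⋯ C(i_2,i_1) ≠ 0`. -/
theorem not_nilpotent_of_squares_nonzero {R : Type*} [CommRing R] [IsDomain R]
    {N : ℕ} (hN : 1 ≤ N) (C : Matrix (Fin N) (Fin N) R)
    (h : ∀ i : Fin N, ∃ k : Fin N, C k i ≠ 0) :
    (∀ n : ℕ, 2 ≤ n → ∃ g : ℕ → Fin N,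
        ∏ j ∈ Finset.range (n - 1), C (g (j + 1)) (g j) ≠ 0) ∧
    ¬ (∃ n : ℕ, 2 ≤ n ∧ ∀ f : ℕ → (Fin N → R), lnp (evolMulFin C) f (n - 1) = 0) := by
  have i0 : Fin N := ⟨0, hN⟩
  let g : ℕ → Fin N := fun j => Nat.rec i0 (fun _ prev => (h prev).choose) j
  have hg : ∀ j, C (g (j + 1)) (g j) ≠ 0 := fun j => (h (g j)).choose_spec
  have key : ∀ n : ℕ, ∏ j ∈ Finset.range n, C (g (j + 1)) (g j) ≠ 0 := fun n =>
    Finset.prod_ne_zero_iff.mpr (fun j _ => hg j)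
  refine ⟨fun n _ => ⟨g, key _⟩, ?_⟩
  rintro ⟨n, hn, hz⟩
  set f : ℕ → (Fin N → R) := fun j => Pi.single (g (j - 1)) 1 with hf
  have single_mul : ∀ (a : Fin N → R) (s : Fin N) (k : Fin N),
      evolMulFin C a (Pi.single s 1) k = a s * C k s := by
    intro a s k
    unfold evolMulFin
    rw [Finset.sum_eq_single s]
    · simp
    · intro i _ hi; simp [Pi.single_apply, hi]
    · simp
  have main : ∀ m, lnp (evolMulFin C) f (m + 1) =
      fun k => (∏ j ∈ Finset.range m, C (g (j + 1)) (g j)) * C k (g m) := by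
    intro m
    induction m with
    | zero =>
        funext k
        show evolMulFin C (f 0) (f 1) k = _
        simp only [hf]
        rw [single_mul]
        simp
    | succ m ih =>
        funext k
        show evolMulFin C (lnp (evolMulFin C) f (m + 1)) (f (m + 2)) k = _
        rw [ih]
        simp only [hf]
        have : (m + 2) - 1 = m + 1 := rfl
        rw [this, single_mul, Finset.prod_range_succ]
  rcases Nat.exists_eq_add_of_le hn with ⟨m, rfl⟩
  have h1 : 2 + m - 1 = m + 1 := by omega
  have h0 := hz f
  rw [h1, main m] at h0
  have := congrFun h0 (g (m + 1))
  simp only [Pi.zero_apply] at this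
  exact key (m + 1) (by rw [Finset.prod_range_succ]; exact this)
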